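/- arXiv:2110.12511 — 4 statements merged into one kernel-verified Lean document; each statement's English description precedes it below -/
import Mathlib

section
/- Let G be a bipartite graph with a total priority order (injective labeling) on its vertices. Then every butterfly of G is contained in exactly one maximal priority bloom of G, where a maximal priority k-bloom is a maximal (2,k)-biclique whose highest-priority vertex lies in the side with exactly two vertices. -/
open Finset

attribute [local instance] Classical.propDecidable

variable {α β : Type*} [Fintype α] [Fintype β] [DecidableEq α] [DecidableEq β]

/-- `B = (B.1, B.2)` is a butterfly (K_{2,2} subgraph) of the bipartite graph with
edge set `E`: two vertices on each side, with all four connecting edges present. -/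
def IsBfly (E : Finset (α × β)) (B : Finset α × Finset β) : Prop :=
  B.1.card = 2 ∧ B.2.card = 2 ∧ ∀ u ∈ B.1, ∀ v ∈ B.2, (u, v) ∈ E

/-- The set of butterflies of the bipartite graph with edge set `E`. -/
noncomputable def bflies (E : Finset (α × β)) : Finset (Finset α × Finset β) :=
  Finset.univ.filter (fun B => IsBfly E B)

/-- The edge `e` is one of the four edges of the butterfly `B`. -/
def edgeInB (e : α × β) (B : Finset α × Finset β) : Prop :=
  e.1 ∈ B.1 ∧ e.2 ∈ B.2

/-- Number of butterflies of `E` containing the edge `e` (the support of `e`). -/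
noncomputable def edgeBflyCount (E : Finset (α × β)) (e : α × β) : ℕ :=
  ((bflies E).filter (fun B => edgeInB e B)).card

/-- `(A, C)` is a priority bloom of `E` w.r.t. priority `p`: a `(2,k)`-biclique subgraph
whose highest-priority vertex lies in the side with exactly two vertices. -/
def IsPBloom (E : Finset (α × β)) (p : α ⊕ β → ℕ) (A : Finset α) (C : Finset β) : Prop :=
  (∀ u ∈ A, ∀ v ∈ C, (u, v) ∈ E) ∧
  ((A.card = 2 ∧ ∃ u ∈ A, (∀ u' ∈ A, p (Sum.inl u') ≤ p (Sum.inl u)) ∧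
      ∀ v ∈ C, p (Sum.inr v) ≤ p (Sum.inl u)) ∨
   (C.card = 2 ∧ ∃ v ∈ C, (∀ v' ∈ C, p (Sum.inr v') ≤ p (Sum.inr v)) ∧
      ∀ u ∈ A, p (Sum.inl u) ≤ p (Sum.inr v)))

/-- `(A, C)` is a maximal priority bloom of `E`: a priority bloom not strictly contained
in any other priority bloom of `E`. -/
def IsMaxPBloom (E : Finset (α × β)) (p : α ⊕ β → ℕ) (A : Finset α) (C : Finset β) : Prop :=
  IsPBloom E p A C ∧
  ∀ A' : Finset α, ∀ C' : Finset β, IsPBloom E p A' C' → A ⊆ A' → C ⊆ C' → A = A' ∧ C = C'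

lemma case_left (E : Finset (α × β)) (p : α ⊕ β → ℕ) (B1 : Finset α) (B2 : Finset β)
    (h1 : B1.card = 2) (h2 : B2.card = 2) (hE : ∀ u ∈ B1, ∀ v ∈ B2, (u, v) ∈ E)
    (u0 : α) (hu0 : u0 ∈ B1) (hmaxA : ∀ u ∈ B1, p (Sum.inl u) ≤ p (Sum.inl u0))
    (hmaxB : ∀ v ∈ B2, p (Sum.inr v) < p (Sum.inl u0)) :
    ∃! AC : Finset α × Finset β,
      IsMaxPBloom E p AC.1 AC.2 ∧ B1 ⊆ AC.1 ∧ B2 ⊆ AC.2 := by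
  set Cs : Finset β := Finset.univ.filter
    (fun v => (∀ u ∈ B1, (u, v) ∈ E) ∧ p (Sum.inr v) ≤ p (Sum.inl u0)) with hCs
  have hB2C : B2 ⊆ Cs := by
    intro v hv
    simp only [hCs, mem_filter, mem_univ, true_and]
    exact ⟨fun u hu => hE u hu v hv, (hmaxB v hv).le⟩
  have hbloom : IsPBloom E p B1 Cs := by
    refine ⟨fun u hu v hv => ?_, Or.inl ⟨h1, u0, hu0, hmaxA, fun v hv => ?_⟩⟩
    · exact ((mem_filter.mp hv).2).1 u hu
    · exact ((mem_filter.mp hv).2).2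
  have hmax : ∀ A' : Finset α, ∀ C' : Finset β, IsPBloom E p A' C' → B1 ⊆ A' → Cs ⊆ C' →
      B1 = A' ∧ Cs = C' := by
    intro A' C' hb hA hC
    rcases hb.2 with ⟨hcard, u', hu', hmax', hC'⟩ | ⟨hcard, v', hv', _, hA'⟩
    · have hA1 : B1 = A' := eq_of_subset_of_card_le hA (by rw [hcard, h1])
      refine ⟨hA1, Subset.antisymm hC ?_⟩
      intro v hv
      simp only [hCs, mem_filter, mem_univ, true_and]
      refine ⟨fun u hu => hb.1 u (hA1 ▸ hu) v hv, ?_⟩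
      exact le_trans (hC' v hv) (hmaxA u' (hA1 ▸ hu'))
    · have hBC' : B2 = C' := eq_of_subset_of_card_le (hB2C.trans hC) (by rw [hcard, h2])
      have := hA' u0 (hA hu0)
      have := hmaxB v' (hBC' ▸ hv')
      omega
  refine ⟨(B1, Cs), ⟨⟨hbloom, hmax⟩, Subset.refl _, hB2C⟩, ?_⟩
  rintro ⟨A, C⟩ ⟨⟨hb, hmx⟩, hA, hC⟩
  rcases hb.2 with ⟨hcard, u, hu, humax, hCle⟩ | ⟨hcard, v, hv, _, hAle⟩
  · have hA1 : B1 = A := eq_of_subset_of_card_le hA (by rw [hcard, h1])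
    have hCsub : C ⊆ Cs := by
      intro v hv
      simp only [hCs, mem_filter, mem_univ, true_and]
      refine ⟨fun u' hu' => hb.1 u' (hA1 ▸ hu') v hv, ?_⟩
      exact le_trans (hCle v hv) (hmaxA u (hA1 ▸ hu))
    obtain ⟨e1, e2⟩ := hmx B1 Cs hbloom hA1.ge hCsub
    exact Prod.ext e1 e2
  · have hBC : B2 = C := eq_of_subset_of_card_le hC (by rw [hcard, h2])
    have := hAle u0 (hA hu0)
    have := hmaxB v (hBC ▸ hv)
    omega

lemma case_right (E : Finset (α × β)) (p : α ⊕ β → ℕ) (B1 : Finset α) (B2 : Finset β)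
    (h1 : B1.card = 2) (h2 : B2.card = 2) (hE : ∀ u ∈ B1, ∀ v ∈ B2, (u, v) ∈ E)
    (v0 : β) (hv0 : v0 ∈ B2) (hmaxB : ∀ v ∈ B2, p (Sum.inr v) ≤ p (Sum.inr v0))
    (hmaxA : ∀ u ∈ B1, p (Sum.inl u) < p (Sum.inr v0)) :
    ∃! AC : Finset α × Finset β,
      IsMaxPBloom E p AC.1 AC.2 ∧ B1 ⊆ AC.1 ∧ B2 ⊆ AC.2 := by
  set As : Finset α := Finset.univ.filter
    (fun u => (∀ v ∈ B2, (u, v) ∈ E) ∧ p (Sum.inl u) ≤ p (Sum.inr v0)) with hAs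
  have hB1A : B1 ⊆ As := by
    intro u hu
    simp only [hAs, mem_filter, mem_univ, true_and]
    exact ⟨fun v hv => hE u hu v hv, (hmaxA u hu).le⟩
  have hbloom : IsPBloom E p As B2 := by
    refine ⟨fun u hu v hv => ?_, Or.inr ⟨h2, v0, hv0, hmaxB, fun u hu => ?_⟩⟩
    · exact ((mem_filter.mp hu).2).1 v hv
    · exact ((mem_filter.mp hu).2).2
  have hmax : ∀ A' : Finset α, ∀ C' : Finset β, IsPBloom E p A' C' → As ⊆ A' → B2 ⊆ C' →
      As = A' ∧ B2 = C' := by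
    intro A' C' hb hA hC
    rcases hb.2 with ⟨hcard, u', hu', _, hC'⟩ | ⟨hcard, v', hv', hmax', hA'⟩
    · have hBA' : B1 = A' := eq_of_subset_of_card_le (hB1A.trans hA) (by rw [hcard, h1])
      have := hC' v0 (hC hv0)
      have := hmaxA u' (hBA' ▸ hu')
      omega
    · have hC1 : B2 = C' := eq_of_subset_of_card_le hC (by rw [hcard, h2])
      refine ⟨Subset.antisymm hA ?_, hC1⟩
      intro u hu
      simp only [hAs, mem_filter, mem_univ, true_and]
      refine ⟨fun v hv => hb.1 u hu v (hC1 ▸ hv), ?_⟩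
      exact le_trans (hA' u hu) (hmaxB v' (hC1 ▸ hv'))
  refine ⟨(As, B2), ⟨⟨hbloom, hmax⟩, hB1A, Subset.refl _⟩, ?_⟩
  rintro ⟨A, C⟩ ⟨⟨hb, hmx⟩, hA, hC⟩
  rcases hb.2 with ⟨hcard, u, hu, _, hCle⟩ | ⟨hcard, v, hv, hvmax, hAle⟩
  · have hA1 : B1 = A := eq_of_subset_of_card_le hA (by rw [hcard, h1])
    have := hCle v0 (hC hv0)
    have := hmaxA u (hA1 ▸ hu)
    omega
  · have hC1 : B2 = C := eq_of_subset_of_card_le hC (by rw [hcard, h2])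
    have hAsub : A ⊆ As := by
      intro u hu
      simp only [hAs, mem_filter, mem_univ, true_and]
      refine ⟨fun v' hv' => hb.1 u hu v' (hC1 ▸ hv'), ?_⟩
      exact le_trans (hAle u hu) (hmaxB v (hC1 ▸ hv))
    obtain ⟨e1, e2⟩ := hmx As B2 hbloom hAsub hC1.ge
    exact Prod.ext e1 e2

/-- Every butterfly of a bipartite graph `E`, with an injective priority on its vertices,
is contained in exactly one maximal priority bloom. -/
theorem butterfly_unique_bloom (E : Finset (α × β)) (p : α ⊕ β → ℕ)
    (hp : Function.Injective p) (B : Finset α × Finset β) (hB : B ∈ bflies E) :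
    ∃! AC : Finset α × Finset β,
      IsMaxPBloom E p AC.1 AC.2 ∧ B.1 ⊆ AC.1 ∧ B.2 ⊆ AC.2 := by
  obtain ⟨h1, h2, hE⟩ : IsBfly E B := (mem_filter.mp hB).2
  have hne1 : B.1.Nonempty := card_pos.mp (by rw [h1]; norm_num)
  have hne2 : B.2.Nonempty := card_pos.mp (by rw [h2]; norm_num)
  obtain ⟨u0, hu0, hmaxA⟩ := B.1.exists_max_image (fun u => p (Sum.inl u)) hne1
  obtain ⟨v0, hv0, hmaxB⟩ := B.2.exists_max_image (fun v => p (Sum.inr v)) hne2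
  have hne : p (Sum.inl u0) ≠ p (Sum.inr v0) := fun h => by simpa using hp h
  rcases lt_or_gt_of_ne hne with h | h
  · exact case_right E p B.1 B.2 h1 h2 hE v0 hv0 hmaxB
      (fun u hu => lt_of_le_of_lt (hmaxA u hu) h)
  · exact case_left E p B.1 B.2 h1 h2 hE u0 hu0 hmaxA
      (fun v hv => lt_of_le_of_lt (hmaxB v hv) h)
end

section
/- For any k' ≤ k, every k-wing of a bipartite graph G is contained in some k'-wing of G. -/
open Finset

attribute [local instance] Classical.propDecidable

variable {α β : Type*} [Fintype α] [Fintype β] [DecidableEq α] [DecidableEq β]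

/-- Two edges are connected by a series of butterflies within the edge set `H`. -/
def BflyConn (H : Finset (α × β)) (e e' : α × β) : Prop :=
  Relation.ReflTransGen (fun a b => ∃ B ∈ bflies H, edgeInB a B ∧ edgeInB b B) e e'

/-- `H` is a `k`-wing of `E`: an edge-induced subgraph in which every edge participates in
at least `k` butterflies, any two edges are butterfly-connected, and which is maximal. -/
def IsKWing (E H : Finset (α × β)) (k : ℕ) : Prop :=
  H ⊆ E ∧ (∀ e ∈ H, k ≤ edgeBflyCount H e) ∧ (∀ e ∈ H, ∀ e' ∈ H, BflyConn H e e') ∧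
  ∀ H' : Finset (α × β), H' ⊆ E → (∀ e ∈ H', k ≤ edgeBflyCount H' e) →
    (∀ e ∈ H', ∀ e' ∈ H', BflyConn H' e e') → H ⊆ H' → H = H'

/-- For `k' ≤ k`, every `k`-wing of `E` is contained in some `k'`-wing of `E`. -/
theorem kwing_hierarchy (E H : Finset (α × β)) (k k' : ℕ) (hk : k' ≤ k)
    (hH : IsKWing E H k) : ∃ H', IsKWing E H' k' ∧ H ⊆ H' := by
  obtain ⟨hHE, hcnt, hconn, -⟩ := hH
  set S : Finset (Finset (α × β)) := E.powerset.filter (fun H' =>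
    (∀ e ∈ H', k' ≤ edgeBflyCount H' e) ∧ (∀ e ∈ H', ∀ e' ∈ H', BflyConn H' e e') ∧ H ⊆ H')
    with hS
  have hHS : H ∈ S := by
    simp only [hS, mem_filter, mem_powerset]
    exact ⟨hHE, fun e he => le_trans hk (hcnt e he), hconn, subset_rfl⟩
  obtain ⟨M, hMS, hmax⟩ := S.exists_max_image (fun H' => H'.card) ⟨H, hHS⟩
  simp only [hS, mem_filter, mem_powerset] at hMS
  obtain ⟨hME, hMcnt, hMconn, hHM⟩ := hMS
  refine ⟨M, ⟨hME, hMcnt, hMconn, ?_⟩, hHM⟩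
  intro H' hH'E hH'cnt hH'conn hMH'
  have hH'S : H' ∈ S := by
    simp only [hS, mem_filter, mem_powerset]
    exact ⟨hH'E, hH'cnt, hH'conn, hHM.trans hMH'⟩
  exact Finset.eq_of_subset_of_card_le hMH' (hmax H' hH'S)
end

section
/- For any k' ≤ k, every k-tip of a bipartite graph G (with respect to peeling side U) is contained in some k'-tip of G. -/
open Finset

attribute [local instance] Classical.propDecidable

variable {α β : Type*} [Fintype α] [Fintype β] [DecidableEq α] [DecidableEq β]

/-- Support of a vertex `u` relative to a vertex subset `U'` of the peeling side:
the number of butterflies whose two left vertices both lie in `U'` and which contain `u`. -/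
noncomputable def tipSupport (E : Finset (α × β)) (U' : Finset α) (u : α) : ℕ :=
  ((bflies E).filter (fun B => B.1 ⊆ U' ∧ u ∈ B.1)).card

/-- Two vertices of `U'` are connected by a series of butterflies in the subgraph
induced on `U' ∪ V`. -/
def TipConn (E : Finset (α × β)) (U' : Finset α) (u u' : α) : Prop :=
  Relation.ReflTransGen (fun a b => ∃ B ∈ bflies E, B.1 ⊆ U' ∧ a ∈ B.1 ∧ b ∈ B.1) u u'

/-- `U'` induces a `k`-tip: every vertex of `U'` is in at least `k` butterflies within the
induced subgraph, any two vertices of `U'` are butterfly-connected, and `U'` is maximal. -/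
def IsKTip (E : Finset (α × β)) (U' : Finset α) (k : ℕ) : Prop :=
  (∀ u ∈ U', k ≤ tipSupport E U' u) ∧ (∀ u ∈ U', ∀ u' ∈ U', TipConn E U' u u') ∧
  ∀ U'' : Finset α, (∀ u ∈ U'', k ≤ tipSupport E U'' u) →
    (∀ u ∈ U'', ∀ u' ∈ U'', TipConn E U'' u u') → U' ⊆ U'' → U' = U''

/-- For `k' ≤ k`, every `k`-tip of `E` is contained in some `k'`-tip of `E`. -/
theorem ktip_hierarchy (E : Finset (α × β)) (U' : Finset α) (k k' : ℕ) (hk : k' ≤ k)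
    (hU : IsKTip E U' k) : ∃ U'', IsKTip E U'' k' ∧ U' ⊆ U'' := by
  classical
  obtain ⟨h1, h2, _⟩ := hU
  set S : Finset (Finset α) := Finset.univ.filter (fun W => U' ⊆ W ∧
    (∀ u ∈ W, k' ≤ tipSupport E W u) ∧ ∀ u ∈ W, ∀ u' ∈ W, TipConn E W u u') with hS
  have hU'S : U' ∈ S := by
    simp only [hS, mem_filter, mem_univ, true_and]
    exact ⟨subset_rfl, fun u hu => le_trans hk (h1 u hu), h2⟩
  obtain ⟨W, hWS, hWmax⟩ := S.exists_max_image Finset.card ⟨U', hU'S⟩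
  simp only [hS, mem_filter, mem_univ, true_and] at hWS
  obtain ⟨hUW, hWsup, hWconn⟩ := hWS
  refine ⟨W, ⟨hWsup, hWconn, ?_⟩, hUW⟩
  intro W'' hsup hconn hsub
  have hW''S : W'' ∈ S := by
    simp only [hS, mem_filter, mem_univ, true_and]
    exact ⟨hUW.trans hsub, hsup, hconn⟩
  exact Finset.eq_of_subset_of_card_le hsub (hWmax _ hW''S)
end

section
/- Suppose wing numbers partition the edges of a bipartite graph G into sets E_1,...,E_P where E_i = {e : θ(i) ≤ θ_e < θ(i+1)} for thresholds θ(1) < θ(2) < ... < θ(P+1). Then for each i, the wing numbers of edges in E_i are completely determined by the subgraph structure restricted to butterflies whose edges all lie in E_i ∪ E_{i+1} ∪ ... ∪ E_P, together with, for each e ∈ E_i, the count of butterflies of G containing e with all edges in ∪_{j≥i} E_j. -/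
open Finset

attribute [local instance] Classical.propDecidable

variable {α β : Type*} [Fintype α] [Fintype β] [DecidableEq α] [DecidableEq β]

/-- The wing number of an edge `e`: the maximum `k` such that `e` belongs to an edge
subset `H ⊆ E` in which every edge participates in at least `k` butterflies within `H`. -/
noncomputable def wingNumber (E : Finset (α × β)) (e : α × β) : ℕ :=
  sSup {k | ∃ H ⊆ E, e ∈ H ∧ ∀ e' ∈ H, k ≤ edgeBflyCount H e'}


/-!
A subgraph `H ∋ e` in which every edge lies in at least `wingNumber E e` butterflies of `H`
also witnesses, for each of its edges `e'`, that `wingNumber E e' ≥ wingNumber E e`. Hence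
`H` survives the deletion of all edges of wing number below any threshold `t ≤ wingNumber E e`,
and the wing number of `e` cannot drop; it cannot grow either, since wing numbers are
monotone in the edge set.
-/

namespace Butterfly

omit [DecidableEq α] [DecidableEq β]

variable {E E' : Finset (α × β)} {e : α × β}

lemma bflies_mono (h : E' ⊆ E) : bflies E' ⊆ bflies E := by
  intro B hB
  obtain ⟨h₁, h₂, hE'⟩ := (mem_filter.1 hB).2
  exact mem_filter.2 ⟨mem_univ _, h₁, h₂, fun u hu v hv => h (hE' u hu v hv)⟩

lemma bddAbove_setOf_wing (E : Finset (α × β)) (e : α × β) :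
    BddAbove {k | ∃ H ⊆ E, e ∈ H ∧ ∀ e' ∈ H, k ≤ edgeBflyCount H e'} := by
  refine ⟨(bflies E).card, ?_⟩
  rintro k ⟨H, hHE, heH, hk⟩
  calc k ≤ edgeBflyCount H e := hk e heH
    _ ≤ (bflies H).card := card_le_card (filter_subset _ _)
    _ ≤ (bflies E).card := card_le_card (bflies_mono hHE)

lemma le_wingNumber {H : Finset (α × β)} {k : ℕ} (hHE : H ⊆ E) (heH : e ∈ H)
    (hk : ∀ e' ∈ H, k ≤ edgeBflyCount H e') : k ≤ wingNumber E e :=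
  le_csSup (bddAbove_setOf_wing E e) ⟨H, hHE, heH, hk⟩

lemma wingNumber_mono (h : E' ⊆ E) : wingNumber E' e ≤ wingNumber E e :=
  csSup_le' fun _ ⟨_, hHE', heH, hk⟩ => le_wingNumber (hHE'.trans h) heH hk

lemma wingNumber_eq_zero_of_notMem (he : e ∉ E) : wingNumber E e = 0 := by
  have hempty : {k | ∃ H ⊆ E, e ∈ H ∧ ∀ e' ∈ H, k ≤ edgeBflyCount H e'} = ∅ :=
    Set.eq_empty_of_forall_notMem fun _ ⟨_, hHE, heH, _⟩ => he (hHE heH)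
  rw [wingNumber, hempty, csSup_empty, Nat.bot_eq_zero]

lemma exists_subset_forall_wingNumber_le_edgeBflyCount (he : e ∈ E) :
    ∃ H ⊆ E, e ∈ H ∧ ∀ e' ∈ H, wingNumber E e ≤ edgeBflyCount H e' :=
  Nat.sSup_mem (s := {k | ∃ H ⊆ E, e ∈ H ∧ ∀ e' ∈ H, k ≤ edgeBflyCount H e'})
    ⟨0, {e}, singleton_subset_iff.2 he, mem_singleton_self e, fun _ _ => Nat.zero_le _⟩
    (bddAbove_setOf_wing E e)

lemma wingNumber_filter_le_wingNumber {t : ℕ} (ht : t ≤ wingNumber E e) :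
    wingNumber (E.filter fun e' => t ≤ wingNumber E e') e = wingNumber E e := by
  refine le_antisymm (wingNumber_mono (filter_subset _ _)) ?_
  by_cases he : e ∈ E
  · obtain ⟨H, hHE, heH, hk⟩ := exists_subset_forall_wingNumber_le_edgeBflyCount he
    have hH : H ⊆ E.filter fun e' => t ≤ wingNumber E e' := fun e' he' =>
      mem_filter.2 ⟨hHE he', ht.trans (le_wingNumber hHE he' hk)⟩
    exact le_wingNumber hH heH hk
  · simp only [wingNumber_eq_zero_of_notMem he, zero_le]

end Butterfly

theorem partition_independence_general (E : Finset (α × β)) (θ : ℕ → ℕ) (i : ℕ)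
    (e : α × β) (hθe : θ i ≤ wingNumber E e) :
    wingNumber (E.filter (fun e' => θ i ≤ wingNumber E e')) e = wingNumber E e :=
  Butterfly.wingNumber_filter_le_wingNumber hθe

/-- Independence of partitions: given strictly increasing thresholds `θ 1 < ⋯ < θ (P+1)`
partitioning edges by wing number, for any edge `e` with `θ i ≤ wingNumber E e`, the wing
number of `e` computed in the restriction to the edges of wing number at least `θ i`
(i.e. to butterflies all of whose edges lie in `⋃_{j ≥ i} E_j`) equals its wing number
in the full graph. -/
theorem partition_independence (E : Finset (α × β)) (P : ℕ) (θ : ℕ → ℕ)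
    (hmono : StrictMonoOn θ (Set.Icc 1 (P + 1))) (i : ℕ) (hi1 : 1 ≤ i) (hiP : i ≤ P)
    (e : α × β) (he : e ∈ E) (hθe : θ i ≤ wingNumber E e) :
    wingNumber (E.filter (fun e' => θ i ≤ wingNumber E e')) e = wingNumber E e :=
  partition_independence_general E θ i e hθe
end
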